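/- Let J be a real 4×4 matrix with Jᵀ = −J and J² = −I₄ (i.e., an orthogonal complex structure on ℝ⁴). Then exactly one of the following holds: either there is a unique unit vector a ∈ ℝ³ with J = K⁺(a), or there is a unique unit vector a ∈ ℝ³ with J = K⁻(a). (Thus the complex structures on ℝ⁴ compatible with the metric are parametrized by the disjoint union of the unit spheres of Λ²₊ and Λ²₋, realizing the two twistor fibres.) -/

import Mathlib

/-!
Every skew-symmetric `J` splits uniquely as `J = K⁺(a) + K⁻(b)` (this is `Λ² = Λ²₊ ⊕ Λ²₋`).
The two summands commute and `K^±(a)² = -|a|²`, so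
`J² = -(|a|² + |b|²) + 2 K⁺(a) K⁻(b)`. Since `K⁺(a) K⁻(b)` is traceless, `J² = -1` forces
`|a|² + |b|² = 1` and `K⁺(a) K⁻(b) = 0`; as `K⁺(a)` is invertible for `a ≠ 0`, one of `a`, `b`
vanishes. The two cases exclude each other because `K⁺(a) = K⁻(b)` only for `a = b = 0`.
-/

open Matrix

/-- The matrix of `K_{s₁⁺}`: e₁↦e₂, e₂↦−e₁, e₃↦e₄, e₄↦−e₃. -/
def J1p : Matrix (Fin 4) (Fin 4) ℝ := !![0,-1,0,0; 1,0,0,0; 0,0,0,-1; 0,0,1,0]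
/-- The matrix of `K_{s₂⁺}`: e₁↦e₃, e₃↦−e₁, e₄↦e₂, e₂↦−e₄. -/
def J2p : Matrix (Fin 4) (Fin 4) ℝ := !![0,0,-1,0; 0,0,0,1; 1,0,0,0; 0,-1,0,0]
/-- The matrix of `K_{s₃⁺}`: e₁↦e₄, e₄↦−e₁, e₂↦e₃, e₃↦−e₂. -/
def J3p : Matrix (Fin 4) (Fin 4) ℝ := !![0,0,0,-1; 0,0,-1,0; 0,1,0,0; 1,0,0,0]
/-- The matrix of `K_{s₁⁻}`: e₁↦e₂, e₂↦−e₁, e₃↦−e₄, e₄↦e₃. -/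
def J1m : Matrix (Fin 4) (Fin 4) ℝ := !![0,-1,0,0; 1,0,0,0; 0,0,0,1; 0,0,-1,0]
/-- The matrix of `K_{s₂⁻}`: e₁↦e₃, e₃↦−e₁, e₄↦−e₂, e₂↦e₄. -/
def J2m : Matrix (Fin 4) (Fin 4) ℝ := !![0,0,-1,0; 0,0,0,-1; 1,0,0,0; 0,1,0,0]
/-- The matrix of `K_{s₃⁻}`: e₁↦e₄, e₄↦−e₁, e₂↦−e₃, e₃↦e₂. -/
def J3m : Matrix (Fin 4) (Fin 4) ℝ := !![0,0,0,-1; 0,0,1,0; 0,-1,0,0; 1,0,0,0]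

/-- `K⁺(a) = a₁J₁⁺ + a₂J₂⁺ + a₃J₃⁺`. -/
def Kp (a : Fin 3 → ℝ) : Matrix (Fin 4) (Fin 4) ℝ := a 0 • J1p + a 1 • J2p + a 2 • J3p
/-- `K⁻(a) = a₁J₁⁻ + a₂J₂⁻ + a₃J₃⁻`. -/
def Km (a : Fin 3 → ℝ) : Matrix (Fin 4) (Fin 4) ℝ := a 0 • J1m + a 1 • J2m + a 2 • J3m

-- The coordinates, in the bases `J₁^±, J₂^±, J₃^±`, of the `Λ²₊` and `Λ²₋` components of a
-- skew-symmetric matrix.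
noncomputable def selfDualPart (J : Matrix (Fin 4) (Fin 4) ℝ) : Fin 3 → ℝ :=
  ![(J 1 0 + J 3 2) / 2, (J 2 0 + J 1 3) / 2, (J 3 0 + J 2 1) / 2]

noncomputable def antiSelfDualPart (J : Matrix (Fin 4) (Fin 4) ℝ) : Fin 3 → ℝ :=
  ![(J 1 0 - J 3 2) / 2, (J 2 0 - J 1 3) / 2, (J 3 0 - J 2 1) / 2]

lemma Kp_eq (a : Fin 3 → ℝ) :
    Kp a = !![0, -a 0, -a 1, -a 2; a 0, 0, -a 2, a 1; a 1, a 2, 0, -a 0; a 2, -a 1, a 0, 0] := by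
  ext i j; fin_cases i <;> fin_cases j <;> simp [Kp, J1p, J2p, J3p]

lemma Km_eq (a : Fin 3 → ℝ) :
    Km a = !![0, -a 0, -a 1, -a 2; a 0, 0, a 2, -a 1; a 1, -a 2, 0, a 0; a 2, a 1, -a 0, 0] := by
  ext i j; fin_cases i <;> fin_cases j <;> simp [Km, J1m, J2m, J3m]

@[simp] lemma Kp_zero : Kp 0 = 0 := by simp [Kp]

@[simp] lemma Km_zero : Km 0 = 0 := by simp [Km]

@[simp] lemma selfDualPart_Kp (a : Fin 3 → ℝ) : selfDualPart (Kp a) = a := by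
  ext i; fin_cases i <;> simp [selfDualPart, Kp_eq]

@[simp] lemma selfDualPart_Km (b : Fin 3 → ℝ) : selfDualPart (Km b) = 0 := by
  ext i; fin_cases i <;> simp [selfDualPart, Km_eq]

@[simp] lemma antiSelfDualPart_Kp (a : Fin 3 → ℝ) : antiSelfDualPart (Kp a) = 0 := by
  ext i; fin_cases i <;> simp [antiSelfDualPart, Kp_eq]

@[simp] lemma antiSelfDualPart_Km (b : Fin 3 → ℝ) : antiSelfDualPart (Km b) = b := by
  ext i; fin_cases i <;> simp [antiSelfDualPart, Km_eq]

lemma eq_Kp_add_Km_of_transpose_eq_neg {J : Matrix (Fin 4) (Fin 4) ℝ} (hJ : Jᵀ = -J) :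
    J = Kp (selfDualPart J) + Km (antiSelfDualPart J) := by
  have h (i j : Fin 4) : J j i = -J i j := by simpa using congrFun (congrFun hJ i) j
  ext i j
  fin_cases i <;> fin_cases j <;> simp [selfDualPart, antiSelfDualPart, Kp_eq, Km_eq] <;>
    linarith [h 0 0, h 1 1, h 2 2, h 3 3, h 1 0, h 2 0, h 3 0, h 2 1, h 3 1, h 3 2]

lemma Kp_injective : Function.Injective Kp := fun a a' h => by
  simpa using congrArg selfDualPart h

lemma Km_injective : Function.Injective Km := fun b b' h => by
  simpa using congrArg antiSelfDualPart h

lemma Kp_eq_Km_iff {a b : Fin 3 → ℝ} : Kp a = Km b ↔ a = 0 ∧ b = 0 := by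
  refine ⟨fun h => ⟨?_, ?_⟩, fun ⟨ha, hb⟩ => by simp [ha, hb]⟩
  · simpa using congrArg selfDualPart h
  · simpa using (congrArg antiSelfDualPart h).symm

lemma Kp_mul_self (a : Fin 3 → ℝ) : Kp a * Kp a = -(a ⬝ᵥ a) • (1 : Matrix (Fin 4) (Fin 4) ℝ) := by
  rw [Kp_eq]; ext i j
  fin_cases i <;> fin_cases j <;>
    simp [mul_apply, Fin.sum_univ_four, dotProduct, Fin.sum_univ_three] <;> ring

lemma Km_mul_self (b : Fin 3 → ℝ) : Km b * Km b = -(b ⬝ᵥ b) • (1 : Matrix (Fin 4) (Fin 4) ℝ) := by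
  rw [Km_eq]; ext i j
  fin_cases i <;> fin_cases j <;>
    simp [mul_apply, Fin.sum_univ_four, dotProduct, Fin.sum_univ_three] <;> ring

lemma Km_mul_Kp (a b : Fin 3 → ℝ) : Km b * Kp a = Kp a * Km b := by
  rw [Kp_eq, Km_eq]; ext i j
  fin_cases i <;> fin_cases j <;> simp [mul_apply, Fin.sum_univ_four] <;> ring

lemma trace_Kp_mul_Km (a b : Fin 3 → ℝ) : trace (Kp a * Km b) = 0 := by
  rw [Kp_eq, Km_eq]; simp [trace, Fin.sum_univ_four]; ring

lemma Kp_add_Km_mul_self (a b : Fin 3 → ℝ) :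
    (Kp a + Km b) * (Kp a + Km b) =
      -(a ⬝ᵥ a + b ⬝ᵥ b) • (1 : Matrix (Fin 4) (Fin 4) ℝ) + 2 • (Kp a * Km b) := by
  rw [add_mul, mul_add, mul_add, Kp_mul_self, Km_mul_self, Km_mul_Kp, two_smul, neg_add, add_smul]
  abel

lemma Kp_add_Km_mul_self_eq_neg_one_iff {a b : Fin 3 → ℝ} :
    (Kp a + Km b) * (Kp a + Km b) = -1 ↔ a ⬝ᵥ a + b ⬝ᵥ b = 1 ∧ Kp a * Km b = 0 := by
  refine ⟨fun h => ?_, fun ⟨hs, hP⟩ => by simp [Kp_add_Km_mul_self, hs, hP]⟩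
  have hP : (2 : ℝ) • (Kp a * Km b) = (a ⬝ᵥ a + b ⬝ᵥ b - 1) • (1 : Matrix (Fin 4) (Fin 4) ℝ) := by
    rw [Kp_add_Km_mul_self, ← ofNat_smul_eq_nsmul (R := ℝ)] at h
    rw [sub_smul, one_smul, sub_eq_add_neg, ← h, neg_smul]
    abel
  have hs : a ⬝ᵥ a + b ⬝ᵥ b = 1 := by
    have := congrArg trace hP
    norm_num [trace_Kp_mul_Km] at this
    linarith
  exact ⟨hs, by simpa [hs] using hP⟩

lemma eq_zero_or_eq_zero_of_Kp_mul_Km_eq_zero {a b : Fin 3 → ℝ} (h : Kp a * Km b = 0) :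
    a = 0 ∨ b = 0 := by
  refine or_iff_not_imp_left.mpr fun ha => Km_injective ?_
  have : -(a ⬝ᵥ a) • Km b = 0 := by
    rw [← one_mul (Km b), ← smul_mul_assoc, ← Kp_mul_self, mul_assoc, h, mul_zero]
  simpa [dotProduct_self_eq_zero, ha] using this

theorem stmt5 :
    ∀ J : Matrix (Fin 4) (Fin 4) ℝ, Jᵀ = -J → J * J = -1 →
      Xor' (∃! a : Fin 3 → ℝ, a ⬝ᵥ a = 1 ∧ J = Kp a)
           (∃! a : Fin 3 → ℝ, a ⬝ᵥ a = 1 ∧ J = Km a) := by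
  intro J hskew hsq
  obtain ⟨a, b, rfl⟩ : ∃ a b, J = Kp a + Km b :=
    ⟨_, _, eq_Kp_add_Km_of_transpose_eq_neg hskew⟩
  obtain ⟨hab, hprod⟩ := Kp_add_Km_mul_self_eq_neg_one_iff.mp hsq
  have not_unit_zero : ¬ (0 : Fin 3 → ℝ) ⬝ᵥ 0 = 1 := by simp
  rcases eq_zero_or_eq_zero_of_Kp_mul_Km_eq_zero hprod with rfl | rfl
  · simp only [Kp_zero, zero_add, dotProduct_zero] at hab ⊢
    refine Or.inr ⟨⟨b, ⟨hab, rfl⟩, fun c hc => Km_injective hc.2.symm⟩, ?_⟩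
    rintro ⟨c, ⟨hc, hKc⟩, -⟩
    exact not_unit_zero ((Kp_eq_Km_iff.mp hKc.symm).2 ▸ hab)
  · simp only [Km_zero, add_zero, dotProduct_zero] at hab ⊢
    refine Or.inl ⟨⟨a, ⟨hab, rfl⟩, fun c hc => Kp_injective hc.2.symm⟩, ?_⟩
    rintro ⟨c, ⟨hc, hKc⟩, -⟩
    exact not_unit_zero ((Kp_eq_Km_iff.mp hKc).2 ▸ hc)
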